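/- arXiv:2312.02881 — 3 statements merged into one kernel-verified Lean document; each statement's English description precedes it below -/
import Mathlib

section
/- Let u_eq(y) = K_u·(f_c·y + (β/2)·y²) + u_c and a_eq(y) = K_a·(f_c·y + (β/2)·y²) + a_c where K_u = (hv)²/((hv)² − (hb)²) and K_a = (hv)(hb)/((hv)² − (hb)²), with hv, hb constants, (hv)² ≠ (hb)². Then for any grid points y_{k−1/2} < y_k < y_{k+1/2} with y_k = (y_{k−1/2}+y_{k+1/2})/2 and Δy = y_{k+1/2} − y_{k−1/2}, the following discrete identities hold: hv·(u_eq(y_{k+1/2}) − u_eq(y_{k−1/2})) − hb·(a_eq(y_{k+1/2}) − a_eq(y_{k−1/2})) = Δy·f(y_k)·hv and hv·(a_eq(y_{k+1/2}) − a_eq(y_{k−1/2})) − hb·(u_eq(y_{k+1/2}) − u_eq(y_{k−1/2})) = 0, where f(y) = f_c + β·y. -/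
theorem stmt3 (fc β hv hb uc ac : ℝ) (hne : hv ^ 2 ≠ hb ^ 2)
    (ykm ykp yk Δy : ℝ) (hlt : ykm < ykp)
    (hyk : yk = (ykm + ykp) / 2) (hΔ : Δy = ykp - ykm) :
    let Ku := hv ^ 2 / (hv ^ 2 - hb ^ 2)
    let Ka := hv * hb / (hv ^ 2 - hb ^ 2)
    let φ := fun y : ℝ => fc * y + β / 2 * y ^ 2
    let ueq := fun y : ℝ => Ku * φ y + uc
    let aeq := fun y : ℝ => Ka * φ y + ac
    hv * (ueq ykp - ueq ykm) - hb * (aeq ykp - aeq ykm) = Δy * (fc + β * yk) * hv ∧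
    hv * (aeq ykp - aeq ykm) - hb * (ueq ykp - ueq ykm) = 0 := by
  have hd : hv ^ 2 - hb ^ 2 ≠ 0 := sub_ne_zero.mpr hne
  subst hyk hΔ
  constructor <;> field_simp <;> ring
end

section
/- Let ψ_{k−1}, ψ_k, ψ_{k+1} ∈ ℝ, Δy > 0, Θ ∈ [1,2], and let s = minmod(Θ(ψ_{k+1}−ψ_k)/Δy, (ψ_{k+1}−ψ_{k−1})/(2Δy), Θ(ψ_k−ψ_{k−1})/Δy). If ψ_{k−1} ≤ ψ_k ≤ ψ_{k+1} (monotone data), then the reconstructed interface values ψ⁻ = ψ_k + (Δy/2)s and ψ⁺ = ψ_k − (Δy/2)s satisfy ψ_{k−1} ≤ ψ⁺ ≤ ψ_k ≤ ψ⁻ ≤ ψ_{k+1}. -/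
noncomputable def minmod3 (c1 c2 c3 : ℝ) : ℝ :=
  if 0 < c1 ∧ 0 < c2 ∧ 0 < c3 then min c1 (min c2 c3)
  else if c1 < 0 ∧ c2 < 0 ∧ c3 < 0 then max c1 (max c2 c3)
  else 0

/-!
For monotone data the centred slope is nonnegative, so minmod cannot return a negative value and
the interface values move away from `ψk` in the right direction. They do not overshoot the
neighbours because `s` is at most each one-sided slope scaled by `Θ`, and half a cell times such a
slope is `Θ / 2` times the jump, which is at most the jump when `Θ ≤ 2`.
-/

section Minmod

variable {c1 c2 c3 : ℝ}

theorem minmod3_nonneg_of_nonneg_middle (h2 : 0 ≤ c2) : 0 ≤ minmod3 c1 c2 c3 := by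
  unfold minmod3
  split_ifs with hpos hneg
  · exact le_min hpos.1.le (le_min hpos.2.1.le hpos.2.2.le)
  · exact absurd hneg.2.1 (not_lt.2 h2)
  · exact le_rfl

theorem minmod3_le_max_left_zero (c1 c2 c3 : ℝ) : minmod3 c1 c2 c3 ≤ max c1 0 := by
  unfold minmod3
  split_ifs with hpos hneg
  · exact (min_le_left _ _).trans (le_max_left _ _)
  · exact (max_lt hneg.1 (max_lt hneg.2.1 hneg.2.2)).le.trans (le_max_right _ _)
  · exact le_max_right _ _

theorem minmod3_le_max_right_zero (c1 c2 c3 : ℝ) : minmod3 c1 c2 c3 ≤ max c3 0 := by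
  unfold minmod3
  split_ifs with hpos hneg
  · exact ((min_le_right _ _).trans (min_le_right _ _)).trans (le_max_left _ _)
  · exact (max_lt hneg.1 (max_lt hneg.2.1 hneg.2.2)).le.trans (le_max_right _ _)
  · exact le_max_right _ _

theorem mul_minmod3_le_of_mul_left_le {t d : ℝ} (ht : 0 ≤ t) (hd : 0 ≤ d) (h : t * c1 ≤ d) :
    t * minmod3 c1 c2 c3 ≤ d :=
  calc t * minmod3 c1 c2 c3 ≤ t * max c1 0 :=
        mul_le_mul_of_nonneg_left (minmod3_le_max_left_zero c1 c2 c3) ht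
    _ = max (t * c1) 0 := by rw [mul_max_of_nonneg _ _ ht, mul_zero]
    _ ≤ d := max_le h hd

theorem mul_minmod3_le_of_mul_right_le {t d : ℝ} (ht : 0 ≤ t) (hd : 0 ≤ d) (h : t * c3 ≤ d) :
    t * minmod3 c1 c2 c3 ≤ d :=
  calc t * minmod3 c1 c2 c3 ≤ t * max c3 0 :=
        mul_le_mul_of_nonneg_left (minmod3_le_max_right_zero c1 c2 c3) ht
    _ = max (t * c3) 0 := by rw [mul_max_of_nonneg _ _ ht, mul_zero]
    _ ≤ d := max_le h hd

end Minmod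

theorem half_mul_limited_slope_le {Δy Θ d : ℝ} (hΔ : Δy ≠ 0) (hΘ : Θ ≤ 2) (hd : 0 ≤ d) :
    Δy / 2 * (Θ * d / Δy) ≤ d := by
  have half_step : Δy / 2 * (Θ * d / Δy) = Θ / 2 * d := by field_simp
  rw [half_step]
  nlinarith

theorem stmt5_general (ψm ψk ψp Δy Θ : ℝ) (hΔ : 0 < Δy) (hΘ2 : Θ ≤ 2)
    (hmono1 : ψm ≤ ψk) (hmono2 : ψk ≤ ψp) :
    let s := minmod3 (Θ * (ψp - ψk) / Δy) ((ψp - ψm) / (2 * Δy)) (Θ * (ψk - ψm) / Δy)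
    let ψminus := ψk + Δy / 2 * s
    let ψplus := ψk - Δy / 2 * s
    ψm ≤ ψplus ∧ ψplus ≤ ψk ∧ ψk ≤ ψminus ∧ ψminus ≤ ψp := by
  intro s ψminus ψplus
  have hjump_right : 0 ≤ ψp - ψk := sub_nonneg.2 hmono2
  have hjump_left : 0 ≤ ψk - ψm := sub_nonneg.2 hmono1
  have hhalf : 0 ≤ Δy / 2 := by positivity
  have hs : 0 ≤ s :=
    minmod3_nonneg_of_nonneg_middle (div_nonneg (by linarith) (by positivity))
  have hright : Δy / 2 * s ≤ ψp - ψk := mul_minmod3_le_of_mul_left_le hhalf hjump_right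
    (half_mul_limited_slope_le hΔ.ne' hΘ2 hjump_right)
  have hleft : Δy / 2 * s ≤ ψk - ψm := mul_minmod3_le_of_mul_right_le hhalf hjump_left
    (half_mul_limited_slope_le hΔ.ne' hΘ2 hjump_left)
  have hshift : 0 ≤ Δy / 2 * s := mul_nonneg hhalf hs
  simp only [ψplus, ψminus]
  exact ⟨by linarith, by linarith, by linarith, by linarith⟩

theorem stmt5 (ψm ψk ψp Δy Θ : ℝ) (hΔ : 0 < Δy) (hΘ1 : 1 ≤ Θ) (hΘ2 : Θ ≤ 2)
    (hmono1 : ψm ≤ ψk) (hmono2 : ψk ≤ ψp) :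
    let s := minmod3 (Θ * (ψp - ψk) / Δy) ((ψp - ψm) / (2 * Δy)) (Θ * (ψk - ψm) / Δy)
    let ψminus := ψk + Δy / 2 * s
    let ψplus := ψk - Δy / 2 * s
    ψm ≤ ψplus ∧ ψplus ≤ ψk ∧ ψk ≤ ψminus ∧ ψminus ≤ ψp :=
  stmt5_general ψm ψk ψp Δy Θ hΔ hΘ2 hmono1 hmono2
end

section
/- For any smooth solution (h,u,v,a,b,Z) of the 1-D MRSW system with h > 0 and hb ≡ constant, the energy density e = h(u²+v²+a²+b²)/2 + g h(h/2 + Z) satisfies the conservation law e_t + [hv(u²+v²+a²+b²)/2 + g h v(h + Z) − hb(au + bv)]_y = 0. -/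
private lemma diffT {F : ℝ → ℝ → ℝ} (hF : ContDiff ℝ (⊤ : ℕ∞) (Function.uncurry F))
    (t y : ℝ) : DifferentiableAt ℝ (fun s => F s y) t :=
  ((hF.comp (contDiff_id.prodMk contDiff_const)).differentiable (by simp)).differentiableAt

private lemma diffY {F : ℝ → ℝ → ℝ} (hF : ContDiff ℝ (⊤ : ℕ∞) (Function.uncurry F))
    (t y : ℝ) : DifferentiableAt ℝ (fun z => F t z) y :=
  ((hF.comp (contDiff_const.prodMk contDiff_id)).differentiable (by simp)).differentiableAt

theorem stmt12 (g : ℝ) (hg : 0 < g) (f Z : ℝ → ℝ) (c : ℝ)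
    (h u v a b : ℝ → ℝ → ℝ)
    (hZsm : ContDiff ℝ (⊤ : ℕ∞) Z)
    (hhsm : ContDiff ℝ (⊤ : ℕ∞) (Function.uncurry h))
    (husm : ContDiff ℝ (⊤ : ℕ∞) (Function.uncurry u))
    (hvsm : ContDiff ℝ (⊤ : ℕ∞) (Function.uncurry v))
    (hasm : ContDiff ℝ (⊤ : ℕ∞) (Function.uncurry a))
    (hbsm : ContDiff ℝ (⊤ : ℕ∞) (Function.uncurry b))
    (hpos : ∀ t y, 0 < h t y)
    -- mass: h_t + (hv)_y = 0
    (mass : ∀ t y, deriv (fun s => h s y) t + deriv (fun z => h t z * v t z) y = 0)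
    -- zonal momentum: (hu)_t + (huv − hab)_y = f·hv
    (momx : ∀ t y, deriv (fun s => h s y * u s y) t +
      deriv (fun z => h t z * u t z * v t z - h t z * a t z * b t z) y =
      f y * (h t y * v t y))
    -- meridional momentum: (hv)_t + (hv² + (g/2)h² − hb²)_y = −f·hu − g·h·Z_y
    (momy : ∀ t y, deriv (fun s => h s y * v s y) t +
      deriv (fun z => h t z * (v t z) ^ 2 + g / 2 * (h t z) ^ 2 - h t z * (b t z) ^ 2) y =
      -(f y) * (h t y * u t y) - g * h t y * deriv Z y)
    -- induction: (ha)_t + (hav − hbu)_y = 0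
    (ind : ∀ t y, deriv (fun s => h s y * a s y) t +
      deriv (fun z => h t z * a t z * v t z - h t z * b t z * u t z) y = 0)
    -- divergence-free: hb ≡ constant
    (divfree : ∀ t y, h t y * b t y = c) :
    ∀ t y,
      deriv (fun s => h s y * ((u s y) ^ 2 + (v s y) ^ 2 + (a s y) ^ 2 + (b s y) ^ 2) / 2 +
        g * h s y * (h s y / 2 + Z y)) t +
      deriv (fun z => h t z * v t z * ((u t z) ^ 2 + (v t z) ^ 2 + (a t z) ^ 2 + (b t z) ^ 2) / 2 +
        g * (h t z * v t z) * (h t z + Z z) -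
        (h t z * b t z) * (a t z * u t z + b t z * v t z)) y = 0 := by
  intro t y
  have Hht : HasDerivAt (fun s => h s y) (deriv (fun s => h s y) t) t :=
    (diffT hhsm t y).hasDerivAt
  have Hut : HasDerivAt (fun s => u s y) (deriv (fun s => u s y) t) t :=
    (diffT husm t y).hasDerivAt
  have Hvt : HasDerivAt (fun s => v s y) (deriv (fun s => v s y) t) t :=
    (diffT hvsm t y).hasDerivAt
  have Hat : HasDerivAt (fun s => a s y) (deriv (fun s => a s y) t) t :=
    (diffT hasm t y).hasDerivAt
  have Hbt : HasDerivAt (fun s => b s y) (deriv (fun s => b s y) t) t :=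
    (diffT hbsm t y).hasDerivAt
  have Hhy : HasDerivAt (fun z => h t z) (deriv (fun z => h t z) y) y :=
    (diffY hhsm t y).hasDerivAt
  have Huy : HasDerivAt (fun z => u t z) (deriv (fun z => u t z) y) y :=
    (diffY husm t y).hasDerivAt
  have Hvy : HasDerivAt (fun z => v t z) (deriv (fun z => v t z) y) y :=
    (diffY hvsm t y).hasDerivAt
  have Hay : HasDerivAt (fun z => a t z) (deriv (fun z => a t z) y) y :=
    (diffY hasm t y).hasDerivAt
  have Hby : HasDerivAt (fun z => b t z) (deriv (fun z => b t z) y) y :=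
    (diffY hbsm t y).hasDerivAt
  have HZ : HasDerivAt Z (deriv Z y) y :=
    ((hZsm.differentiable (by simp)) y).hasDerivAt
  -- expanded equations
  have E1 := mass t y
  rw [(Hhy.fun_mul Hvy).deriv] at E1
  have E2 := momx t y
  rw [(Hht.fun_mul Hut).deriv, (((Hhy.fun_mul Huy).fun_mul Hvy).fun_sub ((Hhy.fun_mul Hay).fun_mul Hby)).deriv] at E2
  have E3 := momy t y
  rw [(Hht.fun_mul Hvt).deriv,
    (((Hhy.fun_mul (Hvy.fun_pow 2)).fun_add ((hasDerivAt_const y (g / 2)).fun_mul (Hhy.fun_pow 2))).fun_sub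
      (Hhy.fun_mul (Hby.fun_pow 2))).deriv] at E3
  have E4 := ind t y
  rw [(Hht.fun_mul Hat).deriv, (((Hhy.fun_mul Hay).fun_mul Hvy).fun_sub ((Hhy.fun_mul Hby).fun_mul Huy)).deriv] at E4
  have E5 : deriv (fun s => h s y) t * b t y + h t y * deriv (fun s => b s y) t = 0 := by
    have hc : (fun s => h s y * b s y) = fun _ => c := funext fun s => divfree s y
    have := (Hht.fun_mul Hbt).deriv
    rw [hc, deriv_const] at this
    linarith
  have E6 : deriv (fun z => h t z) y * b t y + h t y * deriv (fun z => b t z) y = 0 := by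
    have hc : (fun z => h t z * b t z) = fun _ => c := funext fun z => divfree t z
    have := (Hhy.fun_mul Hby).deriv
    rw [hc, deriv_const] at this
    linarith
  -- expand the goal derivatives
  have Qt : HasDerivAt
      (fun s => (u s y) ^ 2 + (v s y) ^ 2 + (a s y) ^ 2 + (b s y) ^ 2)
      (2 * u t y ^ 1 * deriv (fun s => u s y) t + 2 * v t y ^ 1 * deriv (fun s => v s y) t +
        2 * a t y ^ 1 * deriv (fun s => a s y) t + 2 * b t y ^ 1 * deriv (fun s => b s y) t) t :=
    (((Hut.fun_pow 2).fun_add (Hvt.fun_pow 2)).fun_add (Hat.fun_pow 2)).fun_add (Hbt.fun_pow 2)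
  have Qy : HasDerivAt
      (fun z => (u t z) ^ 2 + (v t z) ^ 2 + (a t z) ^ 2 + (b t z) ^ 2)
      (2 * u t y ^ 1 * deriv (fun z => u t z) y + 2 * v t y ^ 1 * deriv (fun z => v t z) y +
        2 * a t y ^ 1 * deriv (fun z => a t z) y + 2 * b t y ^ 1 * deriv (fun z => b t z) y) y :=
    (((Huy.fun_pow 2).fun_add (Hvy.fun_pow 2)).fun_add (Hay.fun_pow 2)).fun_add (Hby.fun_pow 2)
  rw [(((Hht.fun_mul Qt).div_const 2).fun_add
      (((hasDerivAt_const t g).fun_mul Hht).fun_mul ((Hht.div_const 2).fun_add (hasDerivAt_const t (Z y))))).deriv,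
    (((((Hhy.fun_mul Hvy).fun_mul Qy).div_const 2).fun_add
        (((hasDerivAt_const y g).fun_mul (Hhy.fun_mul Hvy)).fun_mul (Hhy.fun_add HZ))).fun_sub
      ((Hhy.fun_mul Hby).fun_mul ((Hay.fun_mul Huy).fun_add (Hby.fun_mul Hvy)))).deriv]
  linear_combination (u t y) * E2 + (v t y) * E3 + (a t y) * E4 +
    (g * (h t y + Z y) - ((u t y) ^ 2 + (v t y) ^ 2 + (a t y) ^ 2 + (b t y) ^ 2) / 2) * E1 +
    (b t y) * E5 + (u t y * a t y + v t y * b t y) * E6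
end
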